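/- arXiv:1309.7819 — 2 statements merged into one kernel-verified Lean document; each statement's English description precedes it below -/
import Mathlib

section
/- For every viscosity μ > 0, every source point r₀ = (x₀, y₀, z₀) ∈ ℝ³ with z₀ > 0, and every point r = (r₁, r₂, 0) ∈ ℝ³ on the plane {z = 0}, the Blake tensor vanishes: G(r − r₀) + K₁(r, r₀) + K₂(r, r₀) + K₃(r, r₀) = 0 (the zero 3×3 matrix). In other words, the Green function K⁰ of the Stokes operator in the flat half-space satisfies the no-slip boundary condition K⁰(·, r₀) = 0 on the wall {z = 0}. -/
/-!
Blake tensor for the Stokes Green function in a half-space.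
Points of ℝ³ are represented as `Fin 3 → ℝ`, and `nrm` is the Euclidean norm.
-/

/-- Euclidean norm on `Fin 3 → ℝ`. -/
noncomputable def nrm (r : Fin 3 → ℝ) : ℝ := Real.sqrt (∑ i, r i ^ 2)

/-- The Stokeslet `G(r) = (1/(8πμ))(Id/|r| + r⊗r/|r|³)`. -/
noncomputable def stokeslet (μ : ℝ) (r : Fin 3 → ℝ) : Fin 3 → Fin 3 → ℝ :=
  fun i j => (1 / (8 * Real.pi * μ)) *
    ((if i = j then (1 : ℝ) else 0) / nrm r + r i * r j / nrm r ^ 3)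

/-- The image point `r̃₀ = (x₀, y₀, −z₀)` of `r₀ = (x₀, y₀, z₀)`. -/
def mirror (r₀ : Fin 3 → ℝ) : Fin 3 → ℝ := ![r₀ 0, r₀ 1, -r₀ 2]

/-- First image kernel `K₁(r, r₀) = −(1/(8πμ))(Id/|r'| + r'⊗r'/|r'|³)`, `r' = r − r̃₀`. -/
noncomputable def K1 (μ : ℝ) (r r₀ : Fin 3 → ℝ) : Fin 3 → Fin 3 → ℝ :=
  fun i j => -(1 / (8 * Real.pi * μ)) *
    ((if i = j then (1 : ℝ) else 0) / nrm (r - mirror r₀)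
      + (r - mirror r₀) i * (r - mirror r₀) j / nrm (r - mirror r₀) ^ 3)

/-- Second image kernel
`K₂(r, r₀)_{ij} = (1/(4πμ)) z₀² (1 − 2δ_{j3})(δ_{ij}/|r'|³ − 3 r'_i r'_j/|r'|⁵)`. -/
noncomputable def K2 (μ : ℝ) (r r₀ : Fin 3 → ℝ) : Fin 3 → Fin 3 → ℝ :=
  fun i j => (1 / (4 * Real.pi * μ)) * (r₀ 2) ^ 2 *
    (1 - 2 * (if j = 2 then (1 : ℝ) else 0)) *
    ((if i = j then (1 : ℝ) else 0) / nrm (r - mirror r₀) ^ 3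
      - 3 * (r - mirror r₀) i * (r - mirror r₀) j / nrm (r - mirror r₀) ^ 5)

/-- Third image kernel
`K₃(r, r₀)_{ij} = −(1/(4πμ)) z₀ (1 − 2δ_{j3})(r'₃ δ_{ij}/|r'|³ − r'_j δ_{i3}/|r'|³
+ r'_i δ_{j3}/|r'|³ − 3 r'_i r'_j r'₃/|r'|⁵)`. -/
noncomputable def K3 (μ : ℝ) (r r₀ : Fin 3 → ℝ) : Fin 3 → Fin 3 → ℝ :=
  fun i j => -(1 / (4 * Real.pi * μ)) * (r₀ 2) *
    (1 - 2 * (if j = 2 then (1 : ℝ) else 0)) *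
    ((r - mirror r₀) 2 * (if i = j then (1 : ℝ) else 0) / nrm (r - mirror r₀) ^ 3
      - (r - mirror r₀) j * (if i = 2 then (1 : ℝ) else 0) / nrm (r - mirror r₀) ^ 3
      + (r - mirror r₀) i * (if j = 2 then (1 : ℝ) else 0) / nrm (r - mirror r₀) ^ 3
      - 3 * (r - mirror r₀) i * (r - mirror r₀) j * (r - mirror r₀) 2 / nrm (r - mirror r₀) ^ 5)

/-- The Blake tensor `K⁰(r, r₀) = G(r − r₀) + K₁(r, r₀) + K₂(r, r₀) + K₃(r, r₀)`. -/
noncomputable def blake (μ : ℝ) (r r₀ : Fin 3 → ℝ) : Fin 3 → Fin 3 → ℝ :=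
  fun i j => stokeslet μ (r - r₀) i j + K1 μ r r₀ i j + K2 μ r r₀ i j + K3 μ r r₀ i j

/-!
On the wall, `d = r − r₀` and `r' = r − r̃₀` are mirror images of each other, so they have the
same length `R` and `G(d) + K₁` collapses to `(d_i d_j − r'_i r'_j)/(8πμR³)`. Since `r'₃ = z₀`
there, the `δ_{ij}` and `r'_i r'_j` terms of `K₂` and `K₃` cancel, and what is left of `K₂ + K₃`
is exactly the negative of that outer-product difference.
-/

lemma mirror_apply_two (v : Fin 3 → ℝ) : mirror v 2 = -v 2 := rfl

lemma mirror_mirror (v : Fin 3 → ℝ) : mirror (mirror v) = v := by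
  funext k
  fin_cases k <;> simp [mirror]

lemma nrm_mirror (v : Fin 3 → ℝ) : nrm (mirror v) = nrm v := by
  simp [nrm, mirror, Fin.sum_univ_three]

lemma sub_mirror_of_apply_two_eq_zero {r : Fin 3 → ℝ} (hr : r 2 = 0) (r₀ : Fin 3 → ℝ) :
    r - mirror r₀ = mirror (r - r₀) := by
  funext k
  fin_cases k <;> simp [mirror, hr]

lemma K1_eq_neg_stokeslet (μ : ℝ) (r r₀ : Fin 3 → ℝ) :
    K1 μ r r₀ = -stokeslet μ (r - mirror r₀) := by
  funext i j
  simp only [K1, stokeslet, Pi.neg_apply, neg_mul]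

lemma stokeslet_mirror_sub_stokeslet (μ : ℝ) (v : Fin 3 → ℝ) (i j : Fin 3) :
    stokeslet μ (mirror v) i j - stokeslet μ v i j =
      (mirror v i * mirror v j - v i * v j) / (8 * Real.pi * μ * nrm v ^ 3) := by
  simp only [stokeslet, nrm_mirror]
  ring

lemma K2_add_K3_of_apply_two_eq_zero (μ : ℝ) {r : Fin 3 → ℝ} (hr : r 2 = 0)
    (r₀ : Fin 3 → ℝ) (i j : Fin 3) :
    K2 μ r r₀ i j + K3 μ r r₀ i j =
      r₀ 2 * (1 - 2 * (if j = 2 then (1 : ℝ) else 0)) *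
        ((r - mirror r₀) j * (if i = 2 then (1 : ℝ) else 0)
          - (r - mirror r₀) i * (if j = 2 then (1 : ℝ) else 0)) /
        (4 * Real.pi * μ * nrm (r - mirror r₀) ^ 3) := by
  have h₂ : (r - mirror r₀) 2 = r₀ 2 := by simp [mirror_apply_two, hr]
  simp only [K2, K3, h₂]
  ring

lemma mirror_mul_mirror_sub_mul (v : Fin 3 → ℝ) (i j : Fin 3) :
    mirror v i * mirror v j - v i * v j =
      -2 * v 2 * (1 - 2 * (if j = 2 then (1 : ℝ) else 0)) *
        (v j * (if i = 2 then (1 : ℝ) else 0) - v i * (if j = 2 then (1 : ℝ) else 0)) := by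
  fin_cases i <;> fin_cases j <;>
    simp only [mirror, Fin.zero_eta, Fin.mk_one, Fin.reduceFinMk, Matrix.cons_val,
      Matrix.cons_val_zero, Matrix.cons_val_one, Fin.reduceEq, ↓reduceIte] <;> ring

theorem blake_tensor_vanishes_on_wall_general (μ : ℝ)
    (r₀ : Fin 3 → ℝ)
    (r : Fin 3 → ℝ) (hr : r 2 = 0) :
    blake μ r r₀ = 0 := by
  funext i j
  set v := r - mirror r₀ with hv
  have hsub : r - r₀ = mirror v := by
    rw [hv, sub_mirror_of_apply_two_eq_zero hr, mirror_mirror]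
  have hz₀ : r₀ 2 = v 2 := by simp [hv, mirror_apply_two, hr]
  have hsum : blake μ r r₀ i j =
      (stokeslet μ (mirror v) i j - stokeslet μ v i j) + (K2 μ r r₀ i j + K3 μ r r₀ i j) := by
    simp only [blake, K1_eq_neg_stokeslet, hsub, ← hv, Pi.neg_apply]
    ring
  rw [hsum, stokeslet_mirror_sub_stokeslet, K2_add_K3_of_apply_two_eq_zero μ hr, ← hv, hz₀,
    mirror_mul_mirror_sub_mul, Pi.zero_apply, Pi.zero_apply]
  ring

/-- The Blake tensor vanishes on the wall `{z = 0}`: for every viscosity `μ > 0`, every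
source point `r₀` with `z₀ > 0`, and every point `r` with third coordinate `0`,
`K⁰(r, r₀) = 0`. -/
theorem blake_tensor_vanishes_on_wall (μ : ℝ) (hμ : 0 < μ)
    (r₀ : Fin 3 → ℝ) (hz₀ : 0 < r₀ 2)
    (r : Fin 3 → ℝ) (hr : r 2 = 0) :
    blake μ r r₀ = 0 :=
  blake_tensor_vanishes_on_wall_general μ r₀ r hr
end

section
/- For every viscosity μ > 0 and every fixed r₀ = (x₀, y₀, z₀) ∈ ℝ³ with z₀ > 0, each column of the Blake tensor is divergence-free in the first variable: for every j ∈ {1,2,3}, the vector field r ↦ (K⁰_{1j}(r, r₀), K⁰_{2j}(r, r₀), K⁰_{3j}(r, r₀)) satisfies Σ_{i=1}^{3} ∂_{r_i} K⁰_{ij}(r, r₀) = 0 for all r ∈ ℝ³ \ {r₀, r̃₀}. -/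
/-!
Each of the four pieces of the Blake tensor is, up to a constant factor and a translation, one of
three fields centred at the origin: the Stokeslet, the source doublet
`δᵢⱼ/|w|³ - 3wᵢwⱼ/|w|⁵` and the Stokes doublet. Divergence is linear and invariant under
translations, so it suffices that each of these three fields is divergence-free away from `0`.
Their partial derivatives follow from the product rule, `∂ₜ wᵢ = δᵢₜ` and
`∂ₜ |w|⁻¹ = -wₜ|w|⁻³`; summing over `t = i`, each divergence is a multiple of
`1 - |w|⁻² ∑ wᵢ²`, which vanishes.
-/

section PartialDerivatives

variable {ι : Type*} [DecidableEq ι] {f g : (ι → ℝ) → ℝ} {D E : ι → ℝ} {w : ι → ℝ}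

def HasPartialsAt (f : (ι → ℝ) → ℝ) (D : ι → ℝ) (w : ι → ℝ) : Prop :=
  ∃ L : (ι → ℝ) →L[ℝ] ℝ, HasFDerivAt f L w ∧ ∀ t, L (Pi.single t 1) = D t

theorem HasPartialsAt.differentiableAt (h : HasPartialsAt f D w) : DifferentiableAt ℝ f w :=
  let ⟨_, hL, _⟩ := h; hL.differentiableAt

theorem HasPartialsAt.fderiv_apply (h : HasPartialsAt f D w) (t : ι) :
    fderiv ℝ f w (Pi.single t 1) = D t :=
  let ⟨_, hL, hD⟩ := h; hL.fderiv ▸ hD t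

theorem hasPartialsAt_const (c : ℝ) : HasPartialsAt (fun _ => c) 0 w :=
  ⟨0, hasFDerivAt_const c w, fun _ => rfl⟩

theorem hasPartialsAt_apply (a : ι) :
    HasPartialsAt (fun y => y a) (fun t => if a = t then 1 else 0) w :=
  ⟨ContinuousLinearMap.proj a, hasFDerivAt_apply a w,
    fun t => by simp [Pi.single_apply]⟩

variable [Fintype ι]

theorem HasPartialsAt.add (hf : HasPartialsAt f D w) (hg : HasPartialsAt g E w) :
    HasPartialsAt (fun y => f y + g y) (D + E) w :=
  let ⟨_, hL, hD⟩ := hf; let ⟨_, hM, hE⟩ := hg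
  ⟨_, hL.fun_add hM, fun t => by simp [hD, hE]⟩

theorem HasPartialsAt.sub (hf : HasPartialsAt f D w) (hg : HasPartialsAt g E w) :
    HasPartialsAt (fun y => f y - g y) (D - E) w :=
  let ⟨_, hL, hD⟩ := hf; let ⟨_, hM, hE⟩ := hg
  ⟨_, hL.fun_sub hM, fun t => by simp [hD, hE]⟩

theorem HasPartialsAt.mul (hf : HasPartialsAt f D w) (hg : HasPartialsAt g E w) :
    HasPartialsAt (fun y => f y * g y) (f w • E + g w • D) w :=
  let ⟨_, hL, hD⟩ := hf; let ⟨_, hM, hE⟩ := hg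
  ⟨_, hL.fun_mul hM, fun t => by simp [hD, hE]⟩

theorem HasPartialsAt.pow (hf : HasPartialsAt f D w) (n : ℕ) :
    HasPartialsAt (fun y => f y ^ n) ((n * f w ^ (n - 1)) • D) w :=
  let ⟨_, hL, hD⟩ := hf
  ⟨_, hL.pow n, fun t => by simp [hD]⟩

theorem HasPartialsAt.inv (hf : HasPartialsAt f D w) (hw : f w ≠ 0) :
    HasPartialsAt (fun y => (f y)⁻¹) (-(f w ^ 2)⁻¹ • D) w :=
  let ⟨_, hL, hD⟩ := hf
  ⟨_, (hasDerivAt_inv hw).comp_hasFDerivAt w hL, fun t => by simp [hD]⟩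

theorem HasPartialsAt.sqrt (hf : HasPartialsAt f D w) (hw : f w ≠ 0) :
    HasPartialsAt (fun y => √(f y)) ((2 * √(f w))⁻¹ • D) w :=
  let ⟨_, hL, hD⟩ := hf
  ⟨_, hL.sqrt hw, fun t => by simp [hD]⟩

theorem hasPartialsAt_sum_sq :
    HasPartialsAt (fun y => ∑ i, y i ^ 2) (fun t => 2 * w t) w := by
  refine ⟨∑ i, (2 * w i) • ContinuousLinearMap.proj i, HasFDerivAt.fun_sum fun i _ => ?_,
    fun t => by simp [Pi.single_apply]⟩
  simpa using (hasFDerivAt_apply (𝕜 := ℝ) (F' := fun _ : ι => ℝ) i w).pow 2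

end PartialDerivatives

theorem sum_sq_pos {ι : Type*} [Fintype ι] {v : ι → ℝ} (hv : v ≠ 0) : 0 < ∑ i, v i ^ 2 := by
  obtain ⟨i, hi⟩ := Function.ne_iff.1 hv
  exact (sq_pos_of_ne_zero hi).trans_le <|
    Finset.single_le_sum (fun j _ => sq_nonneg (v j)) (Finset.mem_univ i)

section EuclideanNorm

variable {w : Fin 3 → ℝ}

theorem nrm_pos (hw : w ≠ 0) : 0 < nrm w := Real.sqrt_pos.2 (sum_sq_pos hw)

theorem inv_nrm_sq_mul_sum_sq (hw : w ≠ 0) : (nrm w)⁻¹ ^ 2 * ∑ i, w i ^ 2 = 1 := by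
  rw [nrm, inv_pow, Real.sq_sqrt (sum_sq_pos hw).le, inv_mul_cancel₀ (sum_sq_pos hw).ne']

theorem hasPartialsAt_nrm (hw : w ≠ 0) : HasPartialsAt nrm (fun t => w t / nrm w) w := by
  convert hasPartialsAt_sum_sq.sqrt (sum_sq_pos hw).ne' using 1
  · rfl
  · funext t
    simp only [nrm, Pi.smul_apply, smul_eq_mul]
    field_simp

theorem hasPartialsAt_inv_nrm (hw : w ≠ 0) :
    HasPartialsAt (fun y => (nrm y)⁻¹) (fun t => -(w t * (nrm w)⁻¹ ^ 3)) w := by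
  convert (hasPartialsAt_nrm hw).inv (nrm_pos hw).ne' using 1
  funext t
  simp only [Pi.smul_apply, smul_eq_mul]
  ring

end EuclideanNorm

section Divergence

variable {ι : Type*} [Fintype ι] [DecidableEq ι] {F G : (ι → ℝ) → ι → ℝ} {w : ι → ℝ}

noncomputable def divergence (F : (ι → ℝ) → ι → ℝ) (w : ι → ℝ) : ℝ :=
  ∑ i, fderiv ℝ (fun y => F y i) w (Pi.single i 1)

theorem divergence_add (hF : ∀ i, DifferentiableAt ℝ (fun y => F y i) w)
    (hG : ∀ i, DifferentiableAt ℝ (fun y => G y i) w) :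
    divergence (F + G) w = divergence F w + divergence G w := by
  simp only [divergence, ← Finset.sum_add_distrib]
  refine Finset.sum_congr rfl fun i _ => ?_
  rw [← add_apply, ← fderiv_add (hF i) (hG i)]
  rfl

theorem divergence_const_smul (c : ℝ) : divergence (c • F) w = c * divergence F w := by
  simp only [divergence, Finset.mul_sum]
  refine Finset.sum_congr rfl fun i _ => ?_
  rw [← smul_eq_mul, ← smul_apply, ← Pi.smul_apply c (fderiv ℝ _),
    ← fderiv_const_smul_field]
  rfl

theorem divergence_comp_sub (c : ι → ℝ) :
    divergence (fun y => F (y - c)) w = divergence F (w - c) :=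
  Finset.sum_congr rfl fun i _ => by rw [fderiv_comp_sub (f := fun z => F z i) c]

/-- Differentiability of the components is part of the notion, so that it is stable under sums. -/
def DivergenceFreeAt (F : (ι → ℝ) → ι → ℝ) (w : ι → ℝ) : Prop :=
  (∀ i, DifferentiableAt ℝ (fun y => F y i) w) ∧ divergence F w = 0

theorem divergenceFreeAt_of_hasPartialsAt {D : ι → ι → ℝ}
    (hF : ∀ i, HasPartialsAt (fun y => F y i) (D i) w) (hD : ∑ i, D i i = 0) :
    DivergenceFreeAt F w :=
  ⟨fun i => (hF i).differentiableAt, by simp only [divergence, (hF _).fderiv_apply, hD]⟩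

theorem DivergenceFreeAt.add (hF : DivergenceFreeAt F w) (hG : DivergenceFreeAt G w) :
    DivergenceFreeAt (F + G) w :=
  ⟨fun i => (hF.1 i).add (hG.1 i), by rw [divergence_add hF.1 hG.1, hF.2, hG.2, add_zero]⟩

theorem DivergenceFreeAt.const_smul (hF : DivergenceFreeAt F w) (c : ℝ) :
    DivergenceFreeAt (c • F) w :=
  ⟨fun i => (hF.1 i).const_mul c, by rw [divergence_const_smul, hF.2, mul_zero]⟩

theorem DivergenceFreeAt.comp_sub {c : ι → ℝ} (hF : DivergenceFreeAt F (w - c)) :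
    DivergenceFreeAt (fun y => F (y - c)) w :=
  ⟨fun i => (differentiableAt_comp_sub (f := fun z => F z i) c).2 (hF.1 i), by
    rw [divergence_comp_sub, hF.2]⟩

end Divergence

/-- `K2 μ r r₀` and `K3 μ r r₀` are, definitionally, constant multiples of `sourceDoublet` and
`stokesDoublet` at `r - mirror r₀`. -/
noncomputable def sourceDoublet (w : Fin 3 → ℝ) (i j : Fin 3) : ℝ :=
  (if i = j then 1 else 0) / nrm w ^ 3 - 3 * w i * w j / nrm w ^ 5

noncomputable def stokesDoublet (w : Fin 3 → ℝ) (i j : Fin 3) : ℝ :=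
  w 2 * (if i = j then 1 else 0) / nrm w ^ 3 - w j * (if i = 2 then 1 else 0) / nrm w ^ 3
    + w i * (if j = 2 then 1 else 0) / nrm w ^ 3 - 3 * w i * w j * w 2 / nrm w ^ 5

section Kernels

variable {w : Fin 3 → ℝ}

theorem hasPartialsAt_stokeslet (μ : ℝ) (hw : w ≠ 0) (i j : Fin 3) :
    HasPartialsAt (fun y => stokeslet μ y i j)
      (fun t => (8 * Real.pi * μ)⁻¹ *
        ((-(if i = j then 1 else 0) * w t + (if i = t then 1 else 0) * w j
            + w i * (if j = t then 1 else 0)) * (nrm w)⁻¹ ^ 3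
          - 3 * w i * w j * w t * (nrm w)⁻¹ ^ 5)) w := by
  have hρ := hasPartialsAt_inv_nrm hw
  convert (hasPartialsAt_const (8 * Real.pi * μ)⁻¹).mul
    (((hasPartialsAt_const (if i = j then 1 else 0)).mul hρ).add
    (((hasPartialsAt_apply i).mul (hasPartialsAt_apply j)).mul (hρ.pow 3))) using 1
  · funext y
    simp only [stokeslet]
    ring
  · funext t
    simp only [Pi.add_apply, Pi.smul_apply, Pi.zero_apply, smul_eq_mul]
    ring

theorem divergenceFreeAt_stokeslet (μ : ℝ) (hw : w ≠ 0) (j : Fin 3) :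
    DivergenceFreeAt (fun y i => stokeslet μ y i j) w := by
  refine divergenceFreeAt_of_hasPartialsAt (fun i => hasPartialsAt_stokeslet μ hw i j) ?_
  calc _ = 3 * (8 * Real.pi * μ)⁻¹ * w j * (nrm w)⁻¹ ^ 3
        * (1 - (nrm w)⁻¹ ^ 2 * ∑ i, w i ^ 2) := by
        fin_cases j <;>
          simp only [Fin.sum_univ_three, Fin.zero_eta, Fin.mk_one, Fin.reduceFinMk, Fin.reduceEq,
            ↓reduceIte] <;>
          ring
    _ = 0 := by rw [inv_nrm_sq_mul_sum_sq hw, sub_self, mul_zero]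

theorem hasPartialsAt_sourceDoublet (hw : w ≠ 0) (i j : Fin 3) :
    HasPartialsAt (fun y => sourceDoublet y i j)
      (fun t => -3 * ((if i = j then 1 else 0) * w t + (if i = t then 1 else 0) * w j
            + w i * (if j = t then 1 else 0)) * (nrm w)⁻¹ ^ 5
          + 15 * w i * w j * w t * (nrm w)⁻¹ ^ 7) w := by
  have hρ := hasPartialsAt_inv_nrm hw
  convert ((hasPartialsAt_const (if i = j then 1 else 0)).mul (hρ.pow 3)).sub
    (((hasPartialsAt_const 3).mul ((hasPartialsAt_apply i).mul (hasPartialsAt_apply j))).mul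
      (hρ.pow 5)) using 1
  · funext y
    simp only [sourceDoublet]
    ring
  · funext t
    simp only [Pi.add_apply, Pi.sub_apply, Pi.smul_apply, Pi.zero_apply, smul_eq_mul]
    ring

theorem divergenceFreeAt_sourceDoublet (hw : w ≠ 0) (j : Fin 3) :
    DivergenceFreeAt (fun y i => sourceDoublet y i j) w := by
  refine divergenceFreeAt_of_hasPartialsAt (fun i => hasPartialsAt_sourceDoublet hw i j) ?_
  calc _ = -15 * w j * (nrm w)⁻¹ ^ 5 * (1 - (nrm w)⁻¹ ^ 2 * ∑ i, w i ^ 2) := by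
        fin_cases j <;>
          simp only [Fin.sum_univ_three, Fin.zero_eta, Fin.mk_one, Fin.reduceFinMk, Fin.reduceEq,
            ↓reduceIte] <;>
          ring
    _ = 0 := by rw [inv_nrm_sq_mul_sum_sq hw, sub_self, mul_zero]

theorem hasPartialsAt_stokesDoublet (hw : w ≠ 0) (i j : Fin 3) :
    HasPartialsAt (fun y => stokesDoublet y i j)
      (fun t => ((if (2 : Fin 3) = t then 1 else 0) * (if i = j then 1 else 0)
            - (if j = t then 1 else 0) * (if i = 2 then 1 else 0)
            + (if i = t then 1 else 0) * (if j = 2 then 1 else 0)) * (nrm w)⁻¹ ^ 3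
          - 3 * (w 2 * (if i = j then 1 else 0) - w j * (if i = 2 then 1 else 0)
            + w i * (if j = 2 then 1 else 0)) * w t * (nrm w)⁻¹ ^ 5
          - 3 * ((if i = t then 1 else 0) * w j * w 2 + w i * (if j = t then 1 else 0) * w 2
            + w i * w j * (if (2 : Fin 3) = t then 1 else 0)) * (nrm w)⁻¹ ^ 5
          + 15 * w i * w j * w 2 * w t * (nrm w)⁻¹ ^ 7) w := by
  have hρ := hasPartialsAt_inv_nrm hw
  have hδ := fun c : ℝ => hasPartialsAt_const (w := w) c
  convert (((((hasPartialsAt_apply 2).mul (hδ (if i = j then 1 else 0))).sub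
      ((hasPartialsAt_apply j).mul (hδ (if i = 2 then 1 else 0)))).add
      ((hasPartialsAt_apply i).mul (hδ (if j = 2 then 1 else 0)))).mul (hρ.pow 3)).sub
    (((hδ 3).mul (((hasPartialsAt_apply i).mul (hasPartialsAt_apply j)).mul
      (hasPartialsAt_apply 2))).mul (hρ.pow 5)) using 1
  · funext y
    simp only [stokesDoublet]
    ring
  · funext t
    simp only [Pi.add_apply, Pi.sub_apply, Pi.smul_apply, Pi.zero_apply, smul_eq_mul]
    ring

theorem divergenceFreeAt_stokesDoublet (hw : w ≠ 0) (j : Fin 3) :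
    DivergenceFreeAt (fun y i => stokesDoublet y i j) w := by
  refine divergenceFreeAt_of_hasPartialsAt (fun i => hasPartialsAt_stokesDoublet hw i j) ?_
  calc _ = (3 * (if j = 2 then 1 else 0) * (nrm w)⁻¹ ^ 3 - 15 * w j * w 2 * (nrm w)⁻¹ ^ 5)
        * (1 - (nrm w)⁻¹ ^ 2 * ∑ i, w i ^ 2) := by
        fin_cases j <;>
          simp only [Fin.sum_univ_three, Fin.zero_eta, Fin.mk_one, Fin.reduceFinMk, Fin.reduceEq,
            ↓reduceIte] <;>
          ring
    _ = 0 := by rw [inv_nrm_sq_mul_sum_sq hw, sub_self, mul_zero]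

end Kernels

section BlakeTensor

variable {μ : ℝ} {r r₀ : Fin 3 → ℝ}

theorem divergenceFreeAt_K1 (h : r ≠ mirror r₀) (j : Fin 3) :
    DivergenceFreeAt (fun y i => K1 μ y r₀ i j) r := by
  convert ((divergenceFreeAt_stokeslet μ (sub_ne_zero.2 h) j).const_smul (-1)).comp_sub using 1
  funext y i
  simp only [K1, stokeslet, Pi.smul_apply, smul_eq_mul]
  ring

theorem divergenceFreeAt_K2 (h : r ≠ mirror r₀) (j : Fin 3) :
    DivergenceFreeAt (fun y i => K2 μ y r₀ i j) r :=
  ((divergenceFreeAt_sourceDoublet (sub_ne_zero.2 h) j).const_smul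
    (1 / (4 * Real.pi * μ) * r₀ 2 ^ 2 * (1 - 2 * if j = 2 then 1 else 0))).comp_sub

theorem divergenceFreeAt_K3 (h : r ≠ mirror r₀) (j : Fin 3) :
    DivergenceFreeAt (fun y i => K3 μ y r₀ i j) r :=
  ((divergenceFreeAt_stokesDoublet (sub_ne_zero.2 h) j).const_smul
    (-(1 / (4 * Real.pi * μ)) * r₀ 2 * (1 - 2 * if j = 2 then 1 else 0))).comp_sub

end BlakeTensor

theorem blake_tensor_divergence_free_general (μ : ℝ)
    (r₀ : Fin 3 → ℝ)
    (j : Fin 3) (r : Fin 3 → ℝ) (h₁ : r ≠ r₀) (h₂ : r ≠ mirror r₀) :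
    ∑ i : Fin 3, fderiv ℝ (fun y : Fin 3 → ℝ => blake μ y r₀ i j) r (Pi.single i 1) = 0 :=
  -- the goal is `divergence` of the column of `blake`, definitionally the sum of the four columns
  ((((divergenceFreeAt_stokeslet μ (sub_ne_zero.2 h₁) j).comp_sub.add
    (divergenceFreeAt_K1 h₂ j)).add (divergenceFreeAt_K2 h₂ j)).add
    (divergenceFreeAt_K3 h₂ j)).2

/-- Each column of the Blake tensor is divergence-free in the first variable:
for `μ > 0`, `r₀` with `z₀ > 0`, and every `j`,
`Σ_{i=1}^{3} ∂_{r_i} K⁰_{ij}(r, r₀) = 0` for all `r ∈ ℝ³ \ {r₀, r̃₀}`. -/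
theorem blake_tensor_divergence_free (μ : ℝ) (hμ : 0 < μ)
    (r₀ : Fin 3 → ℝ) (hz₀ : 0 < r₀ 2)
    (j : Fin 3) (r : Fin 3 → ℝ) (h₁ : r ≠ r₀) (h₂ : r ≠ mirror r₀) :
    ∑ i : Fin 3, fderiv ℝ (fun y : Fin 3 → ℝ => blake μ y r₀ i j) r (Pi.single i 1) = 0 :=
  blake_tensor_divergence_free_general μ r₀ j r h₁ h₂
end
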